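/- Let F be a Borel probability measure on ℝ^q, M ∈ L²(F) nonnegative, and X ∼ F. Define Ω_M(x,h) = ∫_{B_∞(x,h)} M dF. If lim_{h↓0} E[(F(B_∞(X,h)))³]/(E[F(B_∞(X,h))])² = 0, then E[Ω_M(X,h)²] = o(E[F(B_∞(X,h))]) as h ↓ 0. -/

import Mathlib

open MeasureTheory Metric Set Filter Topology
open scoped ENNReal

/-!
Write `a(x) = F(B(x, h))` and split `M ≤ γ + (M - γ)⁺`. Over a ball of mass `a` the bounded part
contributes at most `γ a` to `Ω` and, by Cauchy–Schwarz, the tail at most `√(a ε(γ))` with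
`ε(γ) = E[((M - γ)⁺)²]`, so `E[Ω²] ≤ 2γ² E[a²] + 2 ε(γ) E[a]`. The pointwise bound
`a² ≤ t a + a³ / t` and the cubic-moment hypothesis give `E[a²] = o(E[a])`, while `ε(γ) → 0` as
`γ → ∞` by dominated convergence.
-/

theorem tendsto_nhds_zero_of_forall_le_add {ι κ : Type*} {l : Filter ι} {l' : Filter κ}
    [l'.NeBot] {f : ι → ℝ} {g : κ → ι → ℝ} {c : κ → ℝ} (hf : ∀ᶠ i in l, 0 ≤ f i)
    (hle : ∀ᶠ k in l', ∀ i, f i ≤ g k i + c k) (hg : ∀ k, Tendsto (g k) l (𝓝 0))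
    (hc : Tendsto c l' (𝓝 0)) : Tendsto f l (𝓝 0) := by
  refine tendsto_order.2 ⟨fun b hb => hf.mono fun i hi => hb.trans_le hi, fun b hb => ?_⟩
  obtain ⟨k, hk, hck⟩ := (hle.and (hc.eventually (gt_mem_nhds (half_pos hb)))).exists
  filter_upwards [(hg k).eventually (gt_mem_nhds (half_pos hb))] with i hgi
  linarith [hk i]

theorem measurable_measure_closedBall {α : Type*} [PseudoMetricSpace α] [MeasurableSpace α]
    [OpensMeasurableSpace α] [SecondCountableTopology α] (μ : Measure α) [SFinite μ] (r : ℝ) :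
    Measurable fun x => μ (closedBall x r) := by
  have hs : MeasurableSet {p : α × α | dist p.2 p.1 ≤ r} :=
    (isClosed_le (continuous_snd.dist continuous_fst) continuous_const).measurableSet
  exact measurable_measure_prodMk_left hs

theorem sq_integral_le_measureReal_mul_integral_sq {α : Type*} [MeasurableSpace α]
    {μ : Measure α} [IsFiniteMeasure μ] {g : α → ℝ} (hg : MemLp g 2 μ) :
    (∫ x, g x ∂μ) ^ 2 ≤ μ.real univ * ∫ x, g x ^ 2 ∂μ := by
  set I := ∫ x, g x ∂μ
  set m := μ.real univ
  have hm : 0 ≤ m := measureReal_nonneg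
  rcases hm.eq_or_lt with hm0 | hm0
  · simp [I, Measure.measure_univ_eq_zero.1 ((measureReal_eq_zero_iff).1 hm0.symm)]
  have hamgm : ∫ x, 2 * I * m * g x ∂μ ≤ ∫ x, (I ^ 2 + m ^ 2 * g x ^ 2) ∂μ :=
    integral_mono ((hg.integrable one_le_two).const_mul _)
      ((integrable_const _).add (hg.integrable_sq.const_mul _))
      fun x => by nlinarith [sq_nonneg (I - m * g x)]
  rw [integral_const_mul, integral_add (integrable_const _) (hg.integrable_sq.const_mul _),
    integral_const, integral_const_mul, smul_eq_mul] at hamgm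
  nlinarith

theorem sq_setIntegral_le {α : Type*} [MeasurableSpace α] {μ : Measure α} [IsFiniteMeasure μ]
    {M : α → ℝ} (hM0 : 0 ≤ᵐ[μ] M) (hM : MemLp M 2 μ) (s : Set α) (γ : ℝ) :
    (∫ y in s, M y ∂μ) ^ 2 ≤
      2 * γ ^ 2 * μ.real s ^ 2 + 2 * μ.real s * ∫ y, max (M y - γ) 0 ^ 2 ∂μ := by
  set g : α → ℝ := fun y => max (M y - γ) 0
  have hg : MemLp g 2 μ := (hM.sub (memLp_const γ)).mono
    ((hM.1.sub aestronglyMeasurable_const).sup aestronglyMeasurable_const) (ae_of_all _ fun y => by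
      rw [Real.norm_eq_abs, Real.norm_eq_abs, abs_of_nonneg (le_max_right _ _)]
      exact max_le (le_abs_self _) (abs_nonneg _))
  have hΩ0 : 0 ≤ ∫ y in s, M y ∂μ := integral_nonneg_of_ae (ae_restrict_of_ae hM0)
  have hsplit : ∫ y in s, M y ∂μ ≤ γ * μ.real s + ∫ y in s, g y ∂μ := by
    calc ∫ y in s, M y ∂μ ≤ ∫ y in s, (γ + g y) ∂μ :=
          setIntegral_mono (hM.integrable one_le_two).integrableOn
            ((integrable_const γ).add (hg.integrable one_le_two).integrableOn)
            fun y => by linarith [le_max_left (M y - γ) 0]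
      _ = γ * μ.real s + ∫ y in s, g y ∂μ := by
          rw [integral_add (integrable_const γ) (hg.integrable one_le_two).integrableOn,
            setIntegral_const, smul_eq_mul, mul_comm]
  have htail : (∫ y in s, g y ∂μ) ^ 2 ≤ μ.real s * ∫ y, g y ^ 2 ∂μ := by
    calc (∫ y in s, g y ∂μ) ^ 2 ≤ μ.real s * ∫ y in s, g y ^ 2 ∂μ := by
          simpa using sq_integral_le_measureReal_mul_integral_sq (hg.restrict s)
      _ ≤ μ.real s * ∫ y, g y ^ 2 ∂μ := mul_le_mul_of_nonneg_left
          (setIntegral_le_integral hg.integrable_sq (ae_of_all _ fun y => sq_nonneg _))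
          measureReal_nonneg
  nlinarith [pow_le_pow_left₀ hΩ0 hsplit 2, sq_nonneg (γ * μ.real s - ∫ y in s, g y ∂μ)]

theorem tendsto_integral_sq_max_sub_atTop {α : Type*} [MeasurableSpace α] {μ : Measure α}
    {M : α → ℝ} (hM0 : 0 ≤ᵐ[μ] M) (hM : MemLp M 2 μ) :
    Tendsto (fun γ : ℝ => ∫ y, max (M y - γ) 0 ^ 2 ∂μ) atTop (𝓝 0) := by
  have hlim : ∀ y, Tendsto (fun γ : ℝ => max (M y - γ) 0 ^ 2) atTop (𝓝 0) := fun y =>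
    tendsto_const_nhds.congr' <| (eventually_ge_atTop (M y)).mono fun γ hγ => by
      simp [max_eq_right (sub_nonpos.2 hγ)]
  simpa using tendsto_integral_filter_of_dominated_convergence (fun y => M y ^ 2)
    (Eventually.of_forall fun γ =>
      ((hM.1.sub aestronglyMeasurable_const).sup aestronglyMeasurable_const).pow 2)
    ((eventually_ge_atTop 0).mono fun γ hγ => hM0.mono fun y hy => by
      rw [Real.norm_eq_abs, abs_of_nonneg (sq_nonneg _)]
      exact pow_le_pow_left₀ (le_max_right _ _) (max_le (by simp only [Pi.sub_apply]; linarith) hy) 2)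
    hM.integrable_sq (ae_of_all _ hlim)

section UnitInterval

variable {α : Type*} [MeasurableSpace α] {μ : Measure α} [IsProbabilityMeasure μ]

theorem integrable_pow_of_mem_Icc {a : α → ℝ} (ha : AEStronglyMeasurable a μ)
    (ha0 : ∀ x, 0 ≤ a x) (ha1 : ∀ x, a x ≤ 1) (k : ℕ) : Integrable (fun x => a x ^ k) μ :=
  Integrable.of_bound (ha.pow k) 1 (ae_of_all _ fun x => by
    rw [Real.norm_eq_abs, abs_of_nonneg (pow_nonneg (ha0 x) k)]
    exact pow_le_one₀ (ha0 x) (ha1 x))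

theorem integral_sq_div_integral_le {a : α → ℝ} (ha : AEStronglyMeasurable a μ)
    (ha0 : ∀ x, 0 ≤ a x) (ha1 : ∀ x, a x ≤ 1) {t : ℝ} (ht : 0 < t) :
    (∫ x, a x ^ 2 ∂μ) / ∫ x, a x ∂μ ≤
      ((∫ x, a x ^ 3 ∂μ) / (∫ x, a x ∂μ) ^ 2) / t + t := by
  have hint := integrable_pow_of_mem_Icc ha ha0 ha1
  have hint1 : Integrable a μ := by simpa using hint 1
  set φ := ∫ x, a x ∂μ
  have hE3 : 0 ≤ ∫ x, a x ^ 3 ∂μ := integral_nonneg fun x => pow_nonneg (ha0 x) 3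
  have hφ1 : φ ≤ 1 := by
    simpa using integral_mono hint1 (integrable_const 1) ha1
  rcases (integral_nonneg ha0 : 0 ≤ φ).eq_or_lt with hφ0 | hφ0
  · rw [show φ = 0 from hφ0.symm, div_zero]; positivity
  have hE2 : ∫ x, a x ^ 2 ∂μ ≤ t * φ + (∫ x, a x ^ 3 ∂μ) / t := by
    have hpt : ∀ x, a x ^ 2 ≤ t * a x + a x ^ 3 / t := fun x => by
      rw [← sub_le_iff_le_add', le_div_iff₀ ht]
      nlinarith [mul_nonneg (ha0 x) (sq_nonneg (t - a x))]
    calc ∫ x, a x ^ 2 ∂μ ≤ ∫ x, (t * a x + a x ^ 3 / t) ∂μ :=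
          integral_mono (hint 2) ((hint1.const_mul t).add ((hint 3).div_const t)) hpt
      _ = t * φ + (∫ x, a x ^ 3 ∂μ) / t := by
          rw [integral_add (hint1.const_mul t) ((hint 3).div_const t), integral_const_mul,
            integral_div]
  rw [div_le_iff₀ hφ0]
  calc ∫ x, a x ^ 2 ∂μ ≤ t * φ + (∫ x, a x ^ 3 ∂μ) / t := hE2
    _ ≤ t * φ + (∫ x, a x ^ 3 ∂μ) / t / φ :=
        add_le_add le_rfl (le_div_self (div_nonneg hE3 ht.le) hφ0 hφ1)
    _ = ((∫ x, a x ^ 3 ∂μ) / φ ^ 2 / t + t) * φ := by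
        field_simp [show φ ≠ 0 from hφ0.ne']
        ring

theorem tendsto_integral_sq_div_integral {ι : Type*} {l : Filter ι} {a : ι → α → ℝ}
    (ha : ∀ i, AEStronglyMeasurable (a i) μ) (ha0 : ∀ i x, 0 ≤ a i x) (ha1 : ∀ i x, a i x ≤ 1)
    (hratio : Tendsto (fun i => (∫ x, a i x ^ 3 ∂μ) / (∫ x, a i x ∂μ) ^ 2) l (𝓝 0)) :
    Tendsto (fun i => (∫ x, a i x ^ 2 ∂μ) / ∫ x, a i x ∂μ) l (𝓝 0) :=
  tendsto_nhds_zero_of_forall_le_add (l' := 𝓝[>] (0 : ℝ)) (c := fun t => t)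
    (Eventually.of_forall fun i =>
      div_nonneg (integral_nonneg fun x => sq_nonneg _) (integral_nonneg (ha0 i)))
    (eventually_mem_nhdsWithin.mono fun _ ht i =>
      integral_sq_div_integral_le (ha i) (ha0 i) (ha1 i) ht)
    (fun t => by simpa using hratio.div_const t)
    (tendsto_nhdsWithin_of_tendsto_nhds tendsto_id)

end UnitInterval

theorem integral_sq_setIntegral_div_le {α : Type*} [MeasurableSpace α] {μ : Measure α}
    [IsFiniteMeasure μ] {M : α → ℝ} (hM0 : 0 ≤ᵐ[μ] M) (hM : MemLp M 2 μ) {S : α → Set α}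
    (hS : Measurable fun x => μ (S x)) (γ : ℝ) :
    (∫ x, (∫ y in S x, M y ∂μ) ^ 2 ∂μ) / ∫ x, μ.real (S x) ∂μ ≤
      2 * γ ^ 2 * ((∫ x, μ.real (S x) ^ 2 ∂μ) / ∫ x, μ.real (S x) ∂μ) +
        2 * ∫ y, max (M y - γ) 0 ^ 2 ∂μ := by
  set ε := ∫ y, max (M y - γ) 0 ^ 2 ∂μ
  have hε : 0 ≤ ε := integral_nonneg fun y => sq_nonneg _
  have hint : ∀ k : ℕ, Integrable (fun x => μ.real (S x) ^ k) μ := fun k =>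
    Integrable.of_bound (hS.ennreal_toReal.pow_const k).aestronglyMeasurable (μ.real univ ^ k)
      (ae_of_all _ fun x => by
        rw [Real.norm_eq_abs, abs_of_nonneg (pow_nonneg measureReal_nonneg k)]
        exact pow_le_pow_left₀ measureReal_nonneg (measureReal_mono (subset_univ _)) k)
  have hint1 : Integrable (fun x => μ.real (S x)) μ := by simpa using hint 1
  set φ := ∫ x, μ.real (S x) ∂μ
  have hφ : 0 ≤ φ := integral_nonneg fun x => measureReal_nonneg
  have hmain : ∫ x, (∫ y in S x, M y ∂μ) ^ 2 ∂μ ≤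
      2 * γ ^ 2 * ∫ x, μ.real (S x) ^ 2 ∂μ + 2 * ε * φ := by
    calc ∫ x, (∫ y in S x, M y ∂μ) ^ 2 ∂μ
        ≤ ∫ x, (2 * γ ^ 2 * μ.real (S x) ^ 2 + 2 * ε * μ.real (S x)) ∂μ :=
          integral_mono_of_nonneg (ae_of_all _ fun _ => sq_nonneg _)
            (((hint 2).const_mul _).add (hint1.const_mul _))
            (ae_of_all _ fun x => by
              simpa only [mul_assoc, mul_comm ε] using sq_setIntegral_le hM0 hM (S x) γ)
      _ = 2 * γ ^ 2 * ∫ x, μ.real (S x) ^ 2 ∂μ + 2 * ε * φ := by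
          rw [integral_add ((hint 2).const_mul _) (hint1.const_mul _), integral_const_mul,
            integral_const_mul]
  calc (∫ x, (∫ y in S x, M y ∂μ) ^ 2 ∂μ) / φ
      ≤ (2 * γ ^ 2 * ∫ x, μ.real (S x) ^ 2 ∂μ + 2 * ε * φ) / φ :=
        div_le_div_of_nonneg_right hmain hφ
    _ = 2 * γ ^ 2 * ((∫ x, μ.real (S x) ^ 2 ∂μ) / φ) + 2 * ε * (φ / φ) := by ring
    _ ≤ 2 * γ ^ 2 * ((∫ x, μ.real (S x) ^ 2 ∂μ) / φ) + 2 * ε :=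
        add_le_add le_rfl (mul_le_of_le_one_right (by positivity) (div_self_le_one φ))

theorem stmt16 (q : ℕ) (F : Measure (Fin q → ℝ)) [IsProbabilityMeasure F]
    (M : (Fin q → ℝ) → ℝ) (hM_nonneg : ∀ x, 0 ≤ M x)
    (hM_L2 : MemLp M 2 F)
    (hratio : Tendsto (fun h : ℝ =>
        (∫ x, ((F (Metric.closedBall x h)).toReal) ^ 3 ∂F) /
          (∫ x, (F (Metric.closedBall x h)).toReal ∂F) ^ 2)
      (𝓝[>] (0 : ℝ)) (𝓝 0)) :
    Tendsto (fun h : ℝ =>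
        (∫ x, (∫ y in Metric.closedBall x h, M y ∂F) ^ 2 ∂F) /
          (∫ x, (F (Metric.closedBall x h)).toReal ∂F))
      (𝓝[>] (0 : ℝ)) (𝓝 0) := by
  have hmeas : ∀ h : ℝ, Measurable fun x => F (closedBall x h) := measurable_measure_closedBall F
  have hM0 : 0 ≤ᵐ[F] M := ae_of_all _ hM_nonneg
  have hsq : Tendsto (fun h : ℝ => (∫ x, (F (closedBall x h)).toReal ^ 2 ∂F) /
      ∫ x, (F (closedBall x h)).toReal ∂F) (𝓝[>] 0) (𝓝 0) :=
    tendsto_integral_sq_div_integral (fun h => (hmeas h).ennreal_toReal.aestronglyMeasurable)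
      (fun _ _ => ENNReal.toReal_nonneg) (fun _ _ => measureReal_le_one) hratio
  exact tendsto_nhds_zero_of_forall_le_add (l' := atTop)
    (g := fun γ h => 2 * γ ^ 2 * ((∫ x, (F (closedBall x h)).toReal ^ 2 ∂F) /
      ∫ x, (F (closedBall x h)).toReal ∂F))
    (c := fun γ => 2 * ∫ y, max (M y - γ) 0 ^ 2 ∂F)
    (Eventually.of_forall fun h => div_nonneg (integral_nonneg fun x => sq_nonneg _)
      (integral_nonneg fun x => ENNReal.toReal_nonneg))
    (Eventually.of_forall fun γ h => integral_sq_setIntegral_div_le hM0 hM_L2 (hmeas h) γ)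
    (fun γ => by simpa using hsq.const_mul (2 * γ ^ 2))
    (by simpa using (tendsto_integral_sq_max_sub_atTop hM0 hM_L2).const_mul 2)
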